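/- arXiv:1904.01521 — 3 statements merged into one kernel-verified Lean document; each statement's English description precedes it below -/
import Mathlib

section
/- The matrix exponential maps the tangent space onto the manifold: for every real 3×3 symmetric positive definite matrix U with det(U) = 1 there exists a real 3×3 symmetric matrix X with tr(X) = 0 such that exp(X) = U. -/
/-!
Diagonalize `U = V diag(λ) Vᵀ` with `V` orthogonal and all `λᵢ > 0`, and take for `X` the
functional-calculus logarithm `V diag(log λ) Vᵀ`. It is symmetric, `exp X = U`, and
`tr X = ∑ log λᵢ = log det U = 0`.
-/

namespace Matrix

variable {n : Type*} [Fintype n] [DecidableEq n] {A : Matrix n n ℝ}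

theorem IsHermitian.trace_cfc (hA : A.IsHermitian) (f : ℝ → ℝ) :
    (cfc f A).trace = ∑ i, f (hA.eigenvalues i) := by
  rw [hA.cfc_eq, IsHermitian.cfc, Unitary.conjStarAlgAut_apply, trace_mul_cycle,
    Unitary.coe_star_mul_self]
  simp

theorem PosDef.trace_cfc_log (hA : A.PosDef) : (cfc Real.log A).trace = Real.log A.det := by
  rw [hA.isHermitian.trace_cfc, hA.isHermitian.det_eq_prod_eigenvalues]
  simp only [RCLike.ofReal_real_eq_id, id_eq]
  exact (Real.log_prod fun i _ => (hA.eigenvalues_pos i).ne').symm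

-- `cfc` and `NormedSpace.exp` need no norm; the L2 operator norm, which induces the usual
-- topology, is opened only to apply `CFC.exp_log`.
theorem PosDef.exp_cfc_log (hA : A.PosDef) : NormedSpace.exp (cfc Real.log A) = A := by
  open scoped Matrix.Norms.L2Operator MatrixOrder in
  exact CFC.exp_log A hA.isStrictlyPositive

end Matrix

open Matrix

/-- The matrix exponential maps the tangent space `symsl` onto the manifold `SymSL₊`: every
real 3×3 symmetric positive definite matrix `U` with `det U = 1` is the exponential of some
symmetric traceless matrix `X`. -/
theorem exists_symm_traceless_exp_eq (U : Matrix (Fin 3) (Fin 3) ℝ)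
    (hsymm : Uᵀ = U) (hdet : U.det = 1)
    (hpos : ∀ x : Fin 3 → ℝ, x ≠ 0 → 0 < x ⬝ᵥ U *ᵥ x) :
    ∃ X : Matrix (Fin 3) (Fin 3) ℝ, Xᵀ = X ∧ X.trace = 0 ∧ NormedSpace.exp X = U := by
  have hU : U.PosDef := PosDef.of_dotProduct_mulVec_pos
    (by simpa [IsHermitian] using hsymm) (by simpa using hpos)
  refine ⟨cfc Real.log U, IsSymm.eq (cfc_predicate Real.log U), ?_, hU.exp_cfc_log⟩
  rw [hU.trace_cfc_log, hdet, Real.log_one]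
end

section
/- (Implicit derivative of the reduced coefficients, eq. (A11)) In the discrete reduced-basis setting with W twice differentiable, suppose ξ* : ℝ^{3×3} → ℝᴺ is differentiable on an open set O, satisfies the residual condition Σ_p w_p ⟪P(F^{RB}(p;F̄)), B⁽ⁱ⁾(p)⟫ = 0 for all i and all F̄ ∈ O (where F^{RB}(p;F̄) = F̄ + Σᵢ ξ*ᵢ(F̄) B⁽ⁱ⁾(p)), and that the symmetric matrix D(F̄) with entries D_{ij} = Σ_p w_p D²W(F^{RB}(p;F̄))[B⁽ⁱ⁾(p), B⁽ʲ⁾(p)] is invertible at F̄ ∈ O. Then the derivative of ξ*ⱼ at F̄ in any direction H ∈ ℝ^{3×3} equals Dξ*ⱼ(F̄)[H] = − Σᵢ (D(F̄)⁻¹)_{ij} Σ_p w_p D²W(F^{RB}(p;F̄))[B⁽ⁱ⁾(p), H]. -/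
/-!
Differentiating the residual identity `Σ_p w_p DW(F^RB(p; F̄))[B⁽ⁱ⁾(p)] = 0`, valid on the open
set `O`, gives by the chain rule `Σ_p w_p D²W(F^RB)[H + Σ_k Dξ*_k(F̄)[H] B⁽ᵏ⁾(p), B⁽ⁱ⁾(p)] = 0`.
By symmetry of `D²W` this is the linear system `a + Dξ*(F̄)[H] ᵥ* D(F̄) = 0` with
`a_i = Σ_p w_p D²W(F^RB)[B⁽ⁱ⁾(p), H]`, which the invertibility of `D(F̄)` solves.
-/

open Matrix

attribute [local instance] Matrix.frobeniusSeminormedAddCommGroup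
  Matrix.frobeniusNormedAddCommGroup Matrix.frobeniusNormedSpace

open Filter Topology

theorem Matrix.eq_neg_vecMul_inv_of_add_vecMul_eq_zero {n K : Type*} [Fintype n] [DecidableEq n]
    [CommRing K] {A : Matrix n n K} (hA : IsUnit A) {a c : n → K} (h : a + c ᵥ* A = 0) :
    c = -(a ᵥ* A⁻¹) :=
  calc c = c ᵥ* A ᵥ* A⁻¹ := by
        rw [vecMul_vecMul, mul_nonsing_inv _ ((isUnit_iff_isUnit_det A).mp hA), vecMul_one]
    _ = -(a ᵥ* A⁻¹) := by rw [eq_neg_of_add_eq_zero_right h, neg_vecMul]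

section

variable {E F : Type*} [NormedAddCommGroup E] [NormedSpace ℝ E]
  [NormedAddCommGroup F] [NormedSpace ℝ F] {ι κ : Type*} [Fintype ι] [Fintype κ]

theorem HasFDerivAt.eq_zero_of_eventuallyEq_const {f : E → F} {f' : E →L[ℝ] F} {x : E} {c : F}
    (hf : HasFDerivAt f f' x) (hc : f =ᶠ[𝓝 x] fun _ => c) : f' = 0 :=
  hf.unique ((hasFDerivAt_const c x).congr_of_eventuallyEq hc)

theorem hasFDerivAt_add_sum_smul {ξ : E → ι → ℝ} {ξ' : E →L[ℝ] ι → ℝ} {x : E}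
    (hξ : HasFDerivAt ξ ξ' x) (b : ι → E) :
    HasFDerivAt (fun y => y + ∑ i, ξ y i • b i)
      (ContinuousLinearMap.id ℝ E + ∑ i, ((ContinuousLinearMap.proj i).comp ξ').smulRight (b i))
      x :=
  (hasFDerivAt_id x).add
    (HasFDerivAt.fun_sum fun i _ => ((hasFDerivAt_apply i _).comp x hξ).smul_const (b i))

theorem HasFDerivAt.fderiv_apply_comp {W : E → ℝ} {g : F → E} {g' : F →L[ℝ] E} {x : F}
    (hg : HasFDerivAt g g' x) (hW : DifferentiableAt ℝ (fderiv ℝ W) (g x)) (v : E) :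
    HasFDerivAt (fun y => fderiv ℝ W (g y) v) (((fderiv ℝ (fderiv ℝ W) (g x)).flip v).comp g') x :=
  (ContinuousLinearMap.apply ℝ ℝ v).hasFDerivAt.comp x (hW.hasFDerivAt.comp x hg)

theorem sum_mul_fderiv_fderiv_add_sum_smul_eq_zero {W : E → ℝ} (w : κ → ℝ) (b : ι → κ → E)
    (v : κ → E) {ξ : E → ι → ℝ} {ξ' : E →L[ℝ] ι → ℝ} {x : E} (hξ : HasFDerivAt ξ ξ' x)
    (hW : ∀ p, DifferentiableAt ℝ (fderiv ℝ W) (x + ∑ i, ξ x i • b i p))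
    (hres : ∀ᶠ y in 𝓝 x, ∑ p, w p * fderiv ℝ W (y + ∑ i, ξ y i • b i p) (v p) = 0) (h : E) :
    ∑ p, w p * fderiv ℝ (fderiv ℝ W) (x + ∑ i, ξ x i • b i p) (h + ∑ i, ξ' h i • b i p) (v p)
      = 0 := by
  have hderiv := HasFDerivAt.fun_sum (u := Finset.univ) fun p _ =>
    ((hasFDerivAt_add_sum_smul hξ fun i => b i p).fderiv_apply_comp (hW p) (v p)).const_mul (w p)
  have := congrArg (· h) (hderiv.eq_zero_of_eventuallyEq_const hres)
  simpa only [_root_.sum_apply, _root_.smul_apply, _root_.add_apply, _root_.zero_apply,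
    ContinuousLinearMap.comp_apply, ContinuousLinearMap.id_apply, ContinuousLinearMap.flip_apply,
    ContinuousLinearMap.smulRight_apply, ContinuousLinearMap.proj_apply, smul_eq_mul] using this

theorem sum_mul_apply_add_sum_smul (w : κ → ℝ) (A : κ → E →L[ℝ] F →L[ℝ] ℝ) (h : E)
    (c : ι → ℝ) (b : ι → κ → E) (v : κ → F) :
    ∑ p, w p * A p (h + ∑ k, c k • b k p) (v p) =
      ∑ p, w p * A p h (v p) + ∑ k, c k * ∑ p, w p * A p (b k p) (v p) := by
  simp only [map_add, map_sum, map_smul, _root_.add_apply, FunLike.coe_sum, Finset.sum_apply,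
    FunLike.coe_smul, Pi.smul_apply, smul_eq_mul, mul_add, Finset.sum_add_distrib, Finset.mul_sum]
  rw [Finset.sum_comm]
  congr 1
  exact Finset.sum_congr rfl fun _ _ => Finset.sum_congr rfl fun _ _ => by ring

theorem sum_mul_fderiv_fderiv_apply_add_sum_mul_eq_zero {W : E → ℝ} (hW : Differentiable ℝ W)
    (w : κ → ℝ) (b : ι → κ → E) (v : κ → E) {ξ : E → ι → ℝ} {ξ' : E →L[ℝ] ι → ℝ} {x : E}
    (hξ : HasFDerivAt ξ ξ' x) (hW' : ∀ p, DifferentiableAt ℝ (fderiv ℝ W) (x + ∑ i, ξ x i • b i p))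
    (hres : ∀ᶠ y in 𝓝 x, ∑ p, w p * fderiv ℝ W (y + ∑ i, ξ y i • b i p) (v p) = 0) (h : E) :
    ∑ p, w p * fderiv ℝ (fderiv ℝ W) (x + ∑ i, ξ x i • b i p) (v p) h +
      ∑ k, ξ' h k * ∑ p, w p * fderiv ℝ (fderiv ℝ W) (x + ∑ i, ξ x i • b i p) (b k p) (v p)
      = 0 := by
  have hsymm : ∀ p u u', fderiv ℝ (fderiv ℝ W) (x + ∑ i, ξ x i • b i p) u u' =
      fderiv ℝ (fderiv ℝ W) (x + ∑ i, ξ x i • b i p) u' u := fun p =>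
    second_derivative_symmetric (fun y => (hW y).hasFDerivAt) (hW' p).hasFDerivAt
  simp only [hsymm _ (v _) h]
  rw [← sum_mul_apply_add_sum_smul]
  exact sum_mul_fderiv_fderiv_add_sum_smul_eq_zero w b v hξ hW' hres h

end

theorem implicit_derivative_of_reduced_coefficients_general
    (W : Matrix (Fin 3) (Fin 3) ℝ → ℝ)
    (hW : Differentiable ℝ W) (hW' : Differentiable ℝ (fderiv ℝ W))
    (P : Matrix (Fin 3) (Fin 3) ℝ → Matrix (Fin 3) (Fin 3) ℝ)
    (hP : ∀ F H : Matrix (Fin 3) (Fin 3) ℝ,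
      (∑ a, ∑ b, P F a b * H a b) = fderiv ℝ W F H)
    (Nqp N : ℕ) (w : Fin Nqp → ℝ)
    (B : Fin N → Fin Nqp → Matrix (Fin 3) (Fin 3) ℝ)
    (O : Set (Matrix (Fin 3) (Fin 3) ℝ)) (hO : IsOpen O)
    (ξstar : Matrix (Fin 3) (Fin 3) ℝ → Fin N → ℝ)
    (hξdiff : ∀ Fbar ∈ O, DifferentiableAt ℝ ξstar Fbar)
    (FRB : Matrix (Fin 3) (Fin 3) ℝ → Fin Nqp → Matrix (Fin 3) (Fin 3) ℝ)
    (hFRB : ∀ Fbar p, FRB Fbar p = Fbar + ∑ i, ξstar Fbar i • B i p)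
    (hres : ∀ Fbar ∈ O, ∀ i : Fin N,
      (∑ p, w p * (∑ a, ∑ b, P (FRB Fbar p) a b * B i p a b)) = 0)
    (D : Matrix (Fin 3) (Fin 3) ℝ → Matrix (Fin N) (Fin N) ℝ)
    (hD : ∀ Fbar i j,
      D Fbar i j = ∑ p, w p * fderiv ℝ (fderiv ℝ W) (FRB Fbar p) (B i p) (B j p))
    (Fbar : Matrix (Fin 3) (Fin 3) ℝ) (hFbar : Fbar ∈ O) (hDinv : IsUnit (D Fbar)) :
    ∀ (j : Fin N) (H : Matrix (Fin 3) (Fin 3) ℝ),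
      fderiv ℝ ξstar Fbar H j =
        -∑ i, (D Fbar)⁻¹ i j *
          (∑ p, w p * fderiv ℝ (fderiv ℝ W) (FRB Fbar p) (B i p) H) := by
  intro j H
  have hsystem : (fun i => ∑ p, w p * fderiv ℝ (fderiv ℝ W) (FRB Fbar p) (B i p) H) +
      fderiv ℝ ξstar Fbar H ᵥ* D Fbar = 0 := funext fun i => by
    have hres_near : ∀ᶠ F in 𝓝 Fbar,
        ∑ p, w p * fderiv ℝ W (F + ∑ k, ξstar F k • B k p) (B i p) = 0 := by
      filter_upwards [hO.mem_nhds hFbar] with F hF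
      simpa only [hP, hFRB] using hres F hF i
    simp only [Pi.add_apply, Pi.zero_apply, vecMul, dotProduct, hD, hFRB]
    exact sum_mul_fderiv_fderiv_apply_add_sum_mul_eq_zero hW w B (B i)
      (hξdiff Fbar hFbar).hasFDerivAt (fun p => hW' _) hres_near H
  rw [congrFun (eq_neg_vecMul_inv_of_add_vecMul_eq_zero hDinv hsystem) j]
  simp only [Pi.neg_apply, vecMul, dotProduct, mul_comm]

/-- (Implicit derivative of the reduced coefficients, eq. (A11)) In the discrete reduced-basis
setting with `W` twice differentiable, if the reduced coefficients `ξ*` are differentiable on an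
open set `O`, satisfy the residual condition there, and the reduced Jacobian matrix `D(F̄)` is
invertible at `F̄ ∈ O`, then
`Dξ*ⱼ(F̄)[H] = − Σᵢ (D(F̄)⁻¹)ᵢⱼ Σ_p w_p D²W(F^RB(p;F̄))[B i p, H]`. -/
theorem implicit_derivative_of_reduced_coefficients
    (W : Matrix (Fin 3) (Fin 3) ℝ → ℝ)
    (hW : Differentiable ℝ W) (hW' : Differentiable ℝ (fderiv ℝ W))
    (P : Matrix (Fin 3) (Fin 3) ℝ → Matrix (Fin 3) (Fin 3) ℝ)
    (hP : ∀ F H : Matrix (Fin 3) (Fin 3) ℝ,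
      (∑ a, ∑ b, P F a b * H a b) = fderiv ℝ W F H)
    (Nqp N : ℕ) (w : Fin Nqp → ℝ) (hw : ∀ p, 0 < w p)
    (B : Fin N → Fin Nqp → Matrix (Fin 3) (Fin 3) ℝ)
    (O : Set (Matrix (Fin 3) (Fin 3) ℝ)) (hO : IsOpen O)
    (ξstar : Matrix (Fin 3) (Fin 3) ℝ → Fin N → ℝ)
    (hξdiff : ∀ Fbar ∈ O, DifferentiableAt ℝ ξstar Fbar)
    (FRB : Matrix (Fin 3) (Fin 3) ℝ → Fin Nqp → Matrix (Fin 3) (Fin 3) ℝ)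
    (hFRB : ∀ Fbar p, FRB Fbar p = Fbar + ∑ i, ξstar Fbar i • B i p)
    (hres : ∀ Fbar ∈ O, ∀ i : Fin N,
      (∑ p, w p * (∑ a, ∑ b, P (FRB Fbar p) a b * B i p a b)) = 0)
    (D : Matrix (Fin 3) (Fin 3) ℝ → Matrix (Fin N) (Fin N) ℝ)
    (hD : ∀ Fbar i j,
      D Fbar i j = ∑ p, w p * fderiv ℝ (fderiv ℝ W) (FRB Fbar p) (B i p) (B j p))
    (Fbar : Matrix (Fin 3) (Fin 3) ℝ) (hFbar : Fbar ∈ O) (hDinv : IsUnit (D Fbar)) :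
    ∀ (j : Fin N) (H : Matrix (Fin 3) (Fin 3) ℝ),
      fderiv ℝ ξstar Fbar H j =
        -∑ i, (D Fbar)⁻¹ i j *
          (∑ p, w p * fderiv ℝ (fderiv ℝ W) (FRB Fbar p) (B i p) H) :=
  implicit_derivative_of_reduced_coefficients_general W hW hW' P hP Nqp N w B O hO ξstar hξdiff FRB
    hFRB hres D hD Fbar hFbar hDinv
end

section
/- (Effective stiffness of the reduced-basis model, Appendix B.2) In the discrete reduced-basis setting with W twice differentiable, suppose ξ* : ℝ^{3×3} → ℝᴺ is twice differentiable on an open set O, satisfies the residual condition Σ_p w_p ⟪P(F^{RB}(p;F̄)), B⁽ⁱ⁾(p)⟫ = 0 for all i and all F̄ ∈ O (where F^{RB}(p;F̄) = F̄ + Σᵢ ξ*ᵢ(F̄) B⁽ⁱ⁾(p)), and that the matrix D(F̄) with entries D_{ij} = Σ_p w_p D²W(F^{RB}(p;F̄))[B⁽ⁱ⁾(p), B⁽ʲ⁾(p)] is invertible on O. Then the second derivative of the effective energy W̄^{RB}(F̄) = Σ_p w_p W(F^{RB}(p;F̄)) satisfies, for all directions H, K ∈ ℝ^{3×3}: D²W̄^{RB}(F̄)[K,H]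 = Σ_p w_p D²W(F^{RB}(p;F̄))[K,H] − Σ_{i,j} (D(F̄)⁻¹)_{ij} (Σ_p w_p D²W(F^{RB}(p;F̄))[K, B⁽ⁱ⁾(p)]) · (Σ_q w_q D²W(F^{RB}(q;F̄))[B⁽ʲ⁾(q), H]). -/
/-!
Write `g_p(F̄) = F̄ + Σᵢ ξᵢ(F̄) Bⁱ_p`. By the chain rule
`DW̄(F̄)[K] = Σ_p w_p DW(g_p)[K] + Σᵢ Dξᵢ(F̄)[K] · Σ_p w_p DW(g_p)[Bⁱ_p]`, and the last factor is
the residual, which vanishes on `O`; so `DW̄ = Σ_p w_p DW(g_p)` near `F̄`. Differentiating once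
more, `D²W̄[K,H] = Σ_p w_p D²W(g_p)[K,H] + Σⱼ vⱼ Σ_p w_p D²W(g_p)[Bʲ_p,H]` with `v = Dξ(F̄)[K]`.
Differentiating the residual condition gives `r + v D = 0` with
`rᵢ = Σ_p w_p D²W(g_p)[K,Bⁱ_p]`, hence `v = -r D⁻¹`, which is the correction term.
-/

open Topology Filter

section ReducedBasis

variable {E F : Type*} [NormedAddCommGroup E] [NormedSpace ℝ E] [NormedAddCommGroup F]
  [NormedSpace ℝ F] {κ ι : Type*} [Fintype κ] [Fintype ι] {ξ : E → κ → ℝ} {x : E}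

theorem HasFDerivAt.comp_reducedBasis {Φ : E → F} {Φ' : E →L[ℝ] F} {g : E → E} {v : κ → E}
    (hg : ∀ y, g y = y + ∑ i, ξ y i • v i) (hΦ : HasFDerivAt Φ Φ' (g x))
    (hξ : DifferentiableAt ℝ ξ x) :
    HasFDerivAt (fun y => Φ (g y))
      (Φ' + ∑ i, (ContinuousLinearMap.proj i ∘L fderiv ℝ ξ x).smulRight (Φ' (v i))) x := by
  obtain rfl : g = fun y => y + ∑ i, ξ y i • v i := funext hg
  have hg' : HasFDerivAt (fun y => y + ∑ i, ξ y i • v i)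
      (ContinuousLinearMap.id ℝ E +
        ∑ i, (ContinuousLinearMap.proj i ∘L fderiv ℝ ξ x).smulRight (v i)) x :=
    (hasFDerivAt_id x).add <| HasFDerivAt.fun_sum fun i _ =>
      ((hasFDerivAt_apply i (ξ x)).comp x hξ.hasFDerivAt).smul_const (v i)
  refine (hΦ.comp x hg').congr_fderiv ?_
  ext K
  simp

variable (w : ι → ℝ) (b : κ → ι → E) {g : E → ι → E} {W Wbar : E → ℝ}

theorem fderiv_effectiveEnergy_of_residual (hg : ∀ y p, g y p = y + ∑ i, ξ y i • b i p)
    (hWbar : ∀ y, Wbar y = ∑ p, w p * W (g y p)) (hW : Differentiable ℝ W)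
    (hξ : DifferentiableAt ℝ ξ x) (hres : ∀ i, ∑ p, w p * fderiv ℝ W (g x p) (b i p) = 0) :
    fderiv ℝ Wbar x = ∑ p, w p • fderiv ℝ W (g x p) := by
  have hderiv := HasFDerivAt.fun_sum (u := Finset.univ) fun p _ =>
    ((hW _).hasFDerivAt.comp_reducedBasis (hg · p) hξ).const_mul (w p)
  rw [funext hWbar, hderiv.fderiv]
  ext K
  simp only [sum_apply, smul_apply, add_apply, ContinuousLinearMap.smulRight_apply,
    ContinuousLinearMap.comp_apply, ContinuousLinearMap.proj_apply, smul_eq_mul, mul_add,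
    Finset.sum_add_distrib, add_eq_left, Finset.mul_sum]
  rw [Finset.sum_comm]
  refine Finset.sum_eq_zero fun i _ => ?_
  simp_rw [mul_left_comm (w _), ← Finset.mul_sum, hres i, mul_zero]

theorem fderiv_fderiv_effectiveEnergy_apply (hg : ∀ y p, g y p = y + ∑ i, ξ y i • b i p)
    (hWbar : ∀ y, Wbar y = ∑ p, w p * W (g y p)) (hW : Differentiable ℝ W)
    (hW' : Differentiable ℝ (fderiv ℝ W)) (hξ : ∀ᶠ y in 𝓝 x, DifferentiableAt ℝ ξ y)
    (hres : ∀ᶠ y in 𝓝 x, ∀ i, ∑ p, w p * fderiv ℝ W (g y p) (b i p) = 0) (K H : E) :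
    fderiv ℝ (fderiv ℝ Wbar) x K H =
      ∑ p, w p * fderiv ℝ (fderiv ℝ W) (g x p) K H +
        ∑ j, fderiv ℝ ξ x K j * ∑ p, w p * fderiv ℝ (fderiv ℝ W) (g x p) (b j p) H := by
  have hgrad : fderiv ℝ Wbar =ᶠ[𝓝 x] fun y => ∑ p, w p • fderiv ℝ W (g y p) :=
    (hξ.and hres).mono fun y hy => fderiv_effectiveEnergy_of_residual w b hg hWbar hW hy.1 hy.2
  have hderiv : HasFDerivAt (fun y => ∑ p, w p • fderiv ℝ W (g y p)) _ x :=
    HasFDerivAt.fun_sum fun p _ =>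
      ((hW' _).hasFDerivAt.comp_reducedBasis (hg · p) hξ.self_of_nhds).const_smul (w p)
  rw [hgrad.fderiv_eq, hderiv.fderiv]
  simp only [sum_apply, smul_apply, add_apply, ContinuousLinearMap.smulRight_apply,
    ContinuousLinearMap.comp_apply, ContinuousLinearMap.proj_apply, smul_eq_mul, mul_add,
    Finset.sum_add_distrib, add_right_inj, Finset.mul_sum]
  rw [Finset.sum_comm]
  exact Finset.sum_congr rfl fun j _ => Finset.sum_congr rfl fun p _ => by ring

theorem linearized_residual_eq_zero (hg : ∀ y p, g y p = y + ∑ i, ξ y i • b i p)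
    (hW' : Differentiable ℝ (fderiv ℝ W)) (hξ : DifferentiableAt ℝ ξ x) (i : κ)
    (hres : ∀ᶠ y in 𝓝 x, ∑ p, w p * fderiv ℝ W (g y p) (b i p) = 0) (K : E) :
    ∑ p, w p * fderiv ℝ (fderiv ℝ W) (g x p) K (b i p) +
      ∑ j, fderiv ℝ ξ x K j * ∑ p, w p * fderiv ℝ (fderiv ℝ W) (g x p) (b j p) (b i p) = 0 := by
  have hderiv := HasFDerivAt.fun_sum (u := Finset.univ) fun p _ =>
    ((ContinuousLinearMap.apply ℝ ℝ (b i p)).hasFDerivAt.comp x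
      ((hW' _).hasFDerivAt.comp_reducedBasis (hg · p) hξ)).const_mul (w p)
  have hzero := congr($(hderiv.unique ((hasFDerivAt_const 0 x).congr_of_eventuallyEq hres)) K)
  simp only [sum_apply, smul_apply, add_apply, ContinuousLinearMap.comp_apply,
    ContinuousLinearMap.apply_apply, ContinuousLinearMap.smulRight_apply,
    ContinuousLinearMap.proj_apply, zero_apply, smul_eq_mul] at hzero
  rw [← hzero]
  simp only [mul_add, Finset.sum_add_distrib, Finset.mul_sum, add_right_inj]
  rw [Finset.sum_comm]
  exact Finset.sum_congr rfl fun j _ => Finset.sum_congr rfl fun p _ => by ring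

end ReducedBasis

namespace Matrix

theorem dotProduct_eq_neg_sum_inv_of_add_vecMul_eq_zero {n R : Type*} [Fintype n]
    [DecidableEq n] [CommRing R] {A : Matrix n n R} (hA : IsUnit A) {r v : n → R}
    (h : r + v ᵥ* A = 0) (s : n → R) :
    v ⬝ᵥ s = -∑ i, ∑ j, A⁻¹ i j * (r i * s j) := by
  have hv : v = -(r ᵥ* A⁻¹) := by
    rw [← neg_vecMul, ← eq_neg_of_add_eq_zero_right h, vecMul_vecMul,
      mul_nonsing_inv _ ((isUnit_iff_isUnit_det A).mp hA), vecMul_one]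
  rw [hv, neg_dotProduct, ← dotProduct_mulVec]
  simp only [dotProduct, mulVec, Finset.mul_sum]
  exact congrArg _ (Finset.sum_congr rfl fun i _ => Finset.sum_congr rfl fun j _ => by ring)

end Matrix

open Matrix

attribute [local instance] Matrix.frobeniusSeminormedAddCommGroup
  Matrix.frobeniusNormedAddCommGroup Matrix.frobeniusNormedSpace

theorem effective_stiffness_of_RB_general
    (W : Matrix (Fin 3) (Fin 3) ℝ → ℝ)
    (hW : Differentiable ℝ W) (hW' : Differentiable ℝ (fderiv ℝ W))
    (P : Matrix (Fin 3) (Fin 3) ℝ → Matrix (Fin 3) (Fin 3) ℝ)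
    (hP : ∀ F H : Matrix (Fin 3) (Fin 3) ℝ,
      (∑ a, ∑ b, P F a b * H a b) = fderiv ℝ W F H)
    (Nqp N : ℕ) (w : Fin Nqp → ℝ)
    (B : Fin N → Fin Nqp → Matrix (Fin 3) (Fin 3) ℝ)
    (O : Set (Matrix (Fin 3) (Fin 3) ℝ)) (hO : IsOpen O)
    (ξstar : Matrix (Fin 3) (Fin 3) ℝ → Fin N → ℝ)
    (hξdiff : ∀ Fbar ∈ O, DifferentiableAt ℝ ξstar Fbar)
    (FRB : Matrix (Fin 3) (Fin 3) ℝ → Fin Nqp → Matrix (Fin 3) (Fin 3) ℝ)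
    (hFRB : ∀ Fbar p, FRB Fbar p = Fbar + ∑ i, ξstar Fbar i • B i p)
    (hres : ∀ Fbar ∈ O, ∀ i : Fin N,
      (∑ p, w p * (∑ a, ∑ b, P (FRB Fbar p) a b * B i p a b)) = 0)
    (D : Matrix (Fin 3) (Fin 3) ℝ → Matrix (Fin N) (Fin N) ℝ)
    (hD : ∀ Fbar i j,
      D Fbar i j = ∑ p, w p * fderiv ℝ (fderiv ℝ W) (FRB Fbar p) (B i p) (B j p))
    (hDinv : ∀ Fbar ∈ O, IsUnit (D Fbar))
    (WbarRB : Matrix (Fin 3) (Fin 3) ℝ → ℝ)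
    (hWbarRB : ∀ Fbar, WbarRB Fbar = ∑ p, w p * W (FRB Fbar p)) :
    ∀ Fbar ∈ O, ∀ H K : Matrix (Fin 3) (Fin 3) ℝ,
      fderiv ℝ (fderiv ℝ WbarRB) Fbar K H =
        (∑ p, w p * fderiv ℝ (fderiv ℝ W) (FRB Fbar p) K H) -
        ∑ i, ∑ j, (D Fbar)⁻¹ i j *
          ((∑ p, w p * fderiv ℝ (fderiv ℝ W) (FRB Fbar p) K (B i p)) *
           (∑ q, w q * fderiv ℝ (fderiv ℝ W) (FRB Fbar q) (B j q) H)) := by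
  intro Fbar hFbar H K
  simp only [hP] at hres
  have hnear : O ∈ 𝓝 Fbar := hO.mem_nhds hFbar
  have hlin : (fun i => ∑ p, w p * fderiv ℝ (fderiv ℝ W) (FRB Fbar p) K (B i p)) +
      (fun j => fderiv ℝ ξstar Fbar K j) ᵥ* D Fbar = 0 := by
    funext i
    simp only [Pi.add_apply, vecMul, dotProduct, hD, Pi.zero_apply]
    exact linearized_residual_eq_zero w B hFRB hW' (hξdiff Fbar hFbar) i
      (mem_of_superset hnear fun y hy => hres y hy i) K
  -- `trans` rather than `rw`: the lemma states the goal's left side up to defeq of instances.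
  refine (fderiv_fderiv_effectiveEnergy_apply w B hFRB hWbarRB hW hW'
    (mem_of_superset hnear hξdiff) (mem_of_superset hnear hres) K H).trans ?_
  rw [sub_eq_add_neg, ← dotProduct_eq_neg_sum_inv_of_add_vecMul_eq_zero (hDinv Fbar hFbar) hlin]
  rfl

/-- (Effective stiffness of the reduced-basis model, Appendix B.2) In the discrete
reduced-basis setting with `W` twice differentiable, if `ξ*` is twice differentiable on an open
set `O`, satisfies the residual condition there, and the reduced Jacobian `D` is invertible on
`O`, then the second derivative of the effective energy `W̄^RB` satisfies
`D²W̄^RB(F̄)[K,H] = Σ_p w_p D²W[K,H] − Σ_{i,j} (D⁻¹)ᵢⱼ (Σ_p w_p D²W[K, Bⁱ]) (Σ_q w_q D²W[Bʲ, H])`. -/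
theorem effective_stiffness_of_RB
    (W : Matrix (Fin 3) (Fin 3) ℝ → ℝ)
    (hW : Differentiable ℝ W) (hW' : Differentiable ℝ (fderiv ℝ W))
    (P : Matrix (Fin 3) (Fin 3) ℝ → Matrix (Fin 3) (Fin 3) ℝ)
    (hP : ∀ F H : Matrix (Fin 3) (Fin 3) ℝ,
      (∑ a, ∑ b, P F a b * H a b) = fderiv ℝ W F H)
    (Nqp N : ℕ) (w : Fin Nqp → ℝ) (hw : ∀ p, 0 < w p)
    (B : Fin N → Fin Nqp → Matrix (Fin 3) (Fin 3) ℝ)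
    (O : Set (Matrix (Fin 3) (Fin 3) ℝ)) (hO : IsOpen O)
    (ξstar : Matrix (Fin 3) (Fin 3) ℝ → Fin N → ℝ)
    (hξdiff : ∀ Fbar ∈ O, DifferentiableAt ℝ ξstar Fbar)
    (hξdiff2 : ∀ Fbar ∈ O, DifferentiableAt ℝ (fderiv ℝ ξstar) Fbar)
    (FRB : Matrix (Fin 3) (Fin 3) ℝ → Fin Nqp → Matrix (Fin 3) (Fin 3) ℝ)
    (hFRB : ∀ Fbar p, FRB Fbar p = Fbar + ∑ i, ξstar Fbar i • B i p)
    (hres : ∀ Fbar ∈ O, ∀ i : Fin N,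
      (∑ p, w p * (∑ a, ∑ b, P (FRB Fbar p) a b * B i p a b)) = 0)
    (D : Matrix (Fin 3) (Fin 3) ℝ → Matrix (Fin N) (Fin N) ℝ)
    (hD : ∀ Fbar i j,
      D Fbar i j = ∑ p, w p * fderiv ℝ (fderiv ℝ W) (FRB Fbar p) (B i p) (B j p))
    (hDinv : ∀ Fbar ∈ O, IsUnit (D Fbar))
    (WbarRB : Matrix (Fin 3) (Fin 3) ℝ → ℝ)
    (hWbarRB : ∀ Fbar, WbarRB Fbar = ∑ p, w p * W (FRB Fbar p)) :
    ∀ Fbar ∈ O, ∀ H K : Matrix (Fin 3) (Fin 3) ℝ,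
      fderiv ℝ (fderiv ℝ WbarRB) Fbar K H =
        (∑ p, w p * fderiv ℝ (fderiv ℝ W) (FRB Fbar p) K H) -
        ∑ i, ∑ j, (D Fbar)⁻¹ i j *
          ((∑ p, w p * fderiv ℝ (fderiv ℝ W) (FRB Fbar p) K (B i p)) *
           (∑ q, w q * fderiv ℝ (fderiv ℝ W) (FRB Fbar q) (B j q) H)) :=
  effective_stiffness_of_RB_general W hW hW' P hP Nqp N w B O hO ξstar hξdiff FRB hFRB hres D hD
    hDinv WbarRB hWbarRB
end
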